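/- arXiv:1810.09275 — 13 statements merged into one kernel-verified Lean document; each statement's English description precedes it below -/
import Mathlib

section
/- Let X be a nonempty set and let (X, 𝓑₁) and (X, 𝓑₂) be ball spaces on X. If both (X, 𝓑₁) and (X, 𝓑₂) are spherically complete, then the ball space (X, 𝓑₁ ∪ 𝓑₂) is spherically complete. -/
open Set

/-- A ball space structure on `X`: a nonempty collection of nonempty subsets of `X`. -/
def IsBallSpace {X : Type*} (B : Set (Set X)) : Prop :=
  B.Nonempty ∧ ∀ b ∈ B, b.Nonempty

/-- A nest of balls in `B`: a nonempty subfamily of `B` totally ordered by inclusion. -/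
def IsNest {X : Type*} (B N : Set (Set X)) : Prop :=
  N.Nonempty ∧ N ⊆ B ∧ IsChain (· ⊆ ·) N

/-- Spherical completeness: every nest of balls has nonempty intersection. -/
def SphComplete {X : Type*} (B : Set (Set X)) : Prop :=
  ∀ N, IsNest B N → (⋂₀ N).Nonempty

/-! A nest `N` in `B₁ ∪ B₂` either has its members in `B₁` coinitial, or some `b ∈ N` contains
no member of `N ∩ B₁`; then, `N` being a chain, the members of `N` below `b` all lie in `B₂` and
are coinitial in `N`. In both cases a coinitial subnest lies in one of the two spherically
complete ball spaces, and its intersection is contained in that of `N`. -/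

section

variable {X : Type*}

theorem sInter_subset_sInter_of_coinitial {M N : Set (Set X)}
    (h : ∀ b ∈ N, ∃ a ∈ M, a ⊆ b) : ⋂₀ M ⊆ ⋂₀ N := fun _ hx b hb =>
  let ⟨a, haM, hab⟩ := h b hb
  hab (hx a haM)

theorem IsChain.exists_mem_subset_of_subset {N : Set (Set X)} (hN : IsChain (· ⊆ ·) N)
    {b : Set X} (hb : b ∈ N) : ∀ d ∈ N, ∃ a ∈ {c ∈ N | c ⊆ b}, a ⊆ d := fun d hd =>
  (hN.total hd hb).elim (fun hdb => ⟨d, ⟨hd, hdb⟩, subset_rfl⟩)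
    (fun hbd => ⟨b, ⟨hb, subset_rfl⟩, hbd⟩)

theorem SphComplete.sInter_nonempty_of_coinitial {B M N : Set (Set X)} (hB : SphComplete B)
    (hN : N.Nonempty) (hchain : IsChain (· ⊆ ·) N) (hMN : M ⊆ N) (hMB : M ⊆ B)
    (hcoinit : ∀ b ∈ N, ∃ a ∈ M, a ⊆ b) : (⋂₀ N).Nonempty := by
  obtain ⟨b, hb⟩ := hN
  obtain ⟨a, haM, -⟩ := hcoinit b hb
  exact (hB M ⟨⟨a, haM⟩, hMB, hchain.mono hMN⟩).mono (sInter_subset_sInter_of_coinitial hcoinit)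

end

theorem union_sphComplete_general {X : Type*} (B1 B2 : Set (Set X))
    (h1 : SphComplete B1) (h2 : SphComplete B2) :
    SphComplete (B1 ∪ B2) := by
  rintro N ⟨hN, hNB, hchain⟩
  by_cases hco : ∀ b ∈ N, ∃ a ∈ N ∩ B1, a ⊆ b
  · exact h1.sInter_nonempty_of_coinitial hN hchain inter_subset_left inter_subset_right hco
  · push Not at hco
    obtain ⟨b, hbN, hb⟩ := hco
    have hbelow_B2 : {c ∈ N | c ⊆ b} ⊆ B2 := fun c ⟨hcN, hcb⟩ =>
      (hNB hcN).resolve_left fun hc1 => hb c ⟨hcN, hc1⟩ hcb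
    exact h2.sInter_nonempty_of_coinitial hN hchain (fun _ hc => hc.1) hbelow_B2
      (hchain.exists_mem_subset_of_subset hbN)

theorem union_sphComplete {X : Type*} [Nonempty X] (B1 B2 : Set (Set X))
    (hB1 : IsBallSpace B1) (hB2 : IsBallSpace B2)
    (h1 : SphComplete B1) (h2 : SphComplete B2) :
    SphComplete (B1 ∪ B2) :=
  union_sphComplete_general B1 B2 h1 h2
end

section
/- Let X be a nonempty set and let (X, 𝓑₁) and (X, 𝓑₂) be ball spaces on X. If both (X, 𝓑₁) and (X, 𝓑₂) satisfy S₂, then the ball space (X, 𝓑₁ ∪ 𝓑₂) satisfies S₂. -/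
open Set

/-- S₂: the intersection of every nest of balls contains a ball. -/
def S2 {X : Type*} (B : Set (Set X)) : Prop :=
  ∀ N, IsNest B N → ∃ b ∈ B, b ⊆ ⋂₀ N

/-! A nest `N` of `B₁ ∪ B₂` splits into the subnests `N ∩ B₁` and `N ∩ B₂`. Since `N` is a chain,
one of them is coinitial in `N`: if some `a ∈ N` lies below no member of `N ∩ B₁`, then `a` lies
in `B₂` and below every member of `N ∩ B₁`. The intersection of a coinitial subnest is the
intersection of `N`, so S₂ for the corresponding `Bᵢ` produces the required ball. -/

theorem IsChain.coinitial_inter_or {α : Type*} [Preorder α] {c s t : Set α}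
    (hc : IsChain (· ≤ ·) c) (hst : c ⊆ s ∪ t) :
    (∀ a ∈ c, ∃ b ∈ c ∩ s, b ≤ a) ∨ (∀ a ∈ c, ∃ b ∈ c ∩ t, b ≤ a) := by
  by_contra! ⟨⟨a, ha, hs⟩, ⟨a', ha', ht⟩⟩
  have ha_t : a ∈ t := (hst ha).resolve_left fun has => hs a ⟨ha, has⟩ le_rfl
  have ha'_s : a' ∈ s := (hst ha').resolve_right fun ha't => ht a' ⟨ha', ha't⟩ le_rfl
  rcases hc.total ha ha' with h | h
  · exact ht a ⟨ha, ha_t⟩ h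
  · exact hs a' ⟨ha', ha'_s⟩ h

theorem S2.exists_subset_sInter_of_coinitial {X : Type*} {B N : Set (Set X)} (hB : S2 B)
    (hN : IsChain (· ⊆ ·) N) (hne : N.Nonempty) (hcoinit : ∀ a ∈ N, ∃ b ∈ N ∩ B, b ⊆ a) :
    ∃ b ∈ B, b ⊆ ⋂₀ N := by
  obtain ⟨a, ha⟩ := hne
  obtain ⟨b, hbB, hb⟩ :=
    hB (N ∩ B) ⟨(hcoinit a ha).imp fun _ => And.left, inter_subset_right,
      hN.mono inter_subset_left⟩
  refine ⟨b, hbB, subset_sInter fun a ha => ?_⟩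
  obtain ⟨b', hb', hb'a⟩ := hcoinit a ha
  exact (hb.trans (sInter_subset_of_mem hb')).trans hb'a

theorem union_S2_general {X : Type*} (B1 B2 : Set (Set X))
    (h1 : S2 B1) (h2 : S2 B2) :
    S2 (B1 ∪ B2) := by
  rintro N ⟨hne, hsub, hchain⟩
  rcases IsChain.coinitial_inter_or hchain hsub with hcoinit | hcoinit
  · obtain ⟨b, hb, hbN⟩ := h1.exists_subset_sInter_of_coinitial hchain hne hcoinit
    exact ⟨b, Or.inl hb, hbN⟩
  · obtain ⟨b, hb, hbN⟩ := h2.exists_subset_sInter_of_coinitial hchain hne hcoinit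
    exact ⟨b, Or.inr hb, hbN⟩

theorem union_S2 {X : Type*} [Nonempty X] (B1 B2 : Set (Set X))
    (hB1 : IsBallSpace B1) (hB2 : IsBallSpace B2)
    (h1 : S2 B1) (h2 : S2 B2) :
    S2 (B1 ∪ B2) :=
  union_S2_general B1 B2 h1 h2
end

section
/- Let X be a nonempty set and let (X, 𝓑₁) and (X, 𝓑₂) be ball spaces on X. If both (X, 𝓑₁) and (X, 𝓑₂) satisfy S₄, then the ball space (X, 𝓑₁ ∪ 𝓑₂) satisfies S₄. -/
open Set

/-- S₄: the intersection of every nest of balls is itself a ball. -/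
def S4 {X : Type*} (B : Set (Set X)) : Prop :=
  ∀ N, IsNest B N → ⋂₀ N ∈ B

/-! A nest in `B₁ ∪ B₂` has its `B₁`-balls or its `B₂`-balls coinitial in it: if some ball `b` of
the nest contains no ball of `B₁` from the nest, then every ball of the nest below `b` lies in `B₂`,
and every ball is comparable with `b`. A coinitial subnest has the same intersection, which is a
ball by S₄. -/

theorem IsChain.coinitial_inter_or_coinitial_inter {α : Type*} [Preorder α] {N s t : Set α}
    (hN : IsChain (· ≤ ·) N) (hst : N ⊆ s ∪ t) :
    (∀ b ∈ N, ∃ c ∈ N ∩ s, c ≤ b) ∨ ∀ b ∈ N, ∃ c ∈ N ∩ t, c ≤ b := by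
  refine or_iff_not_imp_left.mpr fun hs => ?_
  obtain ⟨b, hbN, hb⟩ : ∃ b ∈ N, ∀ c ∈ N ∩ s, ¬c ≤ b := by simpa using hs
  have below_b_mem_t : ∀ d ∈ N, d ≤ b → d ∈ t := fun d hd hdb =>
    (hst hd).resolve_left fun hds => hb d ⟨hd, hds⟩ hdb
  intro d hd
  rcases hN.total hbN hd with hbd | hdb
  · exact ⟨b, ⟨hbN, below_b_mem_t b hbN le_rfl⟩, hbd⟩
  · exact ⟨d, ⟨hd, below_b_mem_t d hd hdb⟩, le_rfl⟩

theorem Set.sInter_eq_of_coinitial {X : Type*} {M N : Set (Set X)} (hMN : M ⊆ N)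
    (hco : ∀ b ∈ N, ∃ c ∈ M, c ⊆ b) : ⋂₀ M = ⋂₀ N :=
  subset_antisymm
    (fun _ hx b hb => let ⟨c, hcM, hcb⟩ := hco b hb; hcb (hx c hcM))
    (sInter_subset_sInter hMN)

theorem S4.sInter_mem_of_coinitial {X : Type*} {B N : Set (Set X)} (hB : S4 B)
    (hN : IsChain (· ⊆ ·) N) (hne : N.Nonempty) (hco : ∀ b ∈ N, ∃ c ∈ N ∩ B, c ⊆ b) :
    ⋂₀ N ∈ B := by
  obtain ⟨c, hc, -⟩ := hco hne.some hne.some_mem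
  rw [← sInter_eq_of_coinitial inter_subset_left hco]
  exact hB _ ⟨⟨c, hc⟩, inter_subset_right, hN.mono inter_subset_left⟩

theorem union_S4_general {X : Type*} (B1 B2 : Set (Set X))
    (h1 : S4 B1) (h2 : S4 B2) :
    S4 (B1 ∪ B2) := by
  rintro N ⟨hne, hsub, hchain⟩
  rcases hchain.coinitial_inter_or_coinitial_inter hsub with hco | hco
  · exact Or.inl (h1.sInter_mem_of_coinitial hchain hne hco)
  · exact Or.inr (h2.sInter_mem_of_coinitial hchain hne hco)

theorem union_S4 {X : Type*} [Nonempty X] (B1 B2 : Set (Set X))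
    (hB1 : IsBallSpace B1) (hB2 : IsBallSpace B2)
    (h1 : S4 B1) (h2 : S4 B2) :
    S4 (B1 ∪ B2) :=
  union_S4_general B1 B2 h1 h2
end

section
/- Let (X, 𝓑) be a ball space and let 𝓢 be a maximal centered system of balls in f-un(𝓑), i.e., a centered system in f-un(𝓑) such that no centered system in f-un(𝓑) properly contains 𝓢. Then there exists a subset 𝓢₀ of 𝓢 with 𝓢₀ ⊆ 𝓑 such that 𝓢₀ is a centered system in 𝓑 and ⋂𝓢₀ = ⋂𝓢. -/
open Set

/-- A centered system of balls in `B`: a nonempty subfamily of `B` such that any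
finitely many (at least one) of its members have nonempty intersection. -/
def IsCentered {X : Type*} (B S : Set (Set X)) : Prop :=
  S.Nonempty ∧ S ⊆ B ∧
    ∀ F : Finset (Set X), F.Nonempty → ↑F ⊆ S → (⋂₀ (↑F : Set (Set X))).Nonempty

/-- `finUnions B` is the collection of all unions of finitely many (at least one) balls of `B`. -/
def finUnions {X : Type*} (B : Set (Set X)) : Set (Set X) :=
  { S | ∃ F : Finset (Set X), F.Nonempty ∧ ↑F ⊆ B ∧ S = ⋃₀ (↑F : Set (Set X)) }

/-! Extend `S` to an ultrafilter `𝒰`. A finite union of balls lying in `𝒰` has one of its balls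
in `𝒰`, and by maximality every member of `finUnions B` lying in `𝒰` already belongs to `S`.
Hence every member of `S` contains a ball of `S`, so `S ∩ B` is centered with the same
intersection as `S`. -/

open Filter

namespace IsCentered

variable {X : Type*} {A S : Set (Set X)}

theorem generate_neBot (hS : IsCentered A S) : (generate S).NeBot := by
  obtain ⟨⟨s, hs⟩, -, hfip⟩ := hS
  refine generate_neBot_iff.mpr fun t htS htfin => ?_
  obtain ⟨F, rfl⟩ := htfin.exists_finset_coe
  classical
  -- adding `s` keeps the family nonempty when `t = ∅`, and only shrinks the intersection
  have hsF : (⋂₀ (↑(insert s F) : Set (Set X))).Nonempty :=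
    hfip _ (Finset.insert_nonempty s F) (by simpa [insert_subset_iff] using ⟨hs, htS⟩)
  exact hsF.mono (sInter_subset_sInter (by simp))

theorem of_subset_ultrafilter (𝒰 : Ultrafilter X) (hne : S.Nonempty) (hSA : S ⊆ A)
    (hS𝒰 : ∀ s ∈ S, s ∈ 𝒰) : IsCentered A S :=
  ⟨hne, hSA, fun F _ hFS => Ultrafilter.nonempty_of_mem <|
    (sInter_mem F.finite_toSet).mpr fun s hs => hS𝒰 s (hFS hs)⟩

theorem mono {T A' : Set (Set X)} (hS : IsCentered A S) (hTS : T ⊆ S) (hne : T.Nonempty)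
    (hTA' : T ⊆ A') : IsCentered A' T :=
  ⟨hne, hTA', fun F hF hFT => hS.2.2 F hF (hFT.trans hTS)⟩

theorem mem_of_mem_ultrafilter (hS : IsCentered A S)
    (hmax : ∀ T : Set (Set X), IsCentered A T → S ⊆ T → T = S) (𝒰 : Ultrafilter X)
    (hS𝒰 : ∀ s ∈ S, s ∈ 𝒰) {a : Set X} (ha : a ∈ A) (ha𝒰 : a ∈ 𝒰) : a ∈ S := by
  have hins : IsCentered A (insert a S) :=
    of_subset_ultrafilter 𝒰 (insert_nonempty a S) (insert_subset ha hS.2.1)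
      (forall_mem_insert.mpr ⟨ha𝒰, hS𝒰⟩)
  exact hmax _ hins (subset_insert a S) ▸ mem_insert a S

end IsCentered

theorem mem_finUnions_of_mem {X : Type*} {B : Set (Set X)} {b : Set X} (hb : b ∈ B) :
    b ∈ finUnions B :=
  ⟨{b}, Finset.singleton_nonempty b, by simpa using hb, by simp⟩

theorem exists_ball_mem_subset_of_maximal {X : Type*} {B S : Set (Set X)}
    (hS : IsCentered (finUnions B) S)
    (hmax : ∀ T : Set (Set X), IsCentered (finUnions B) T → S ⊆ T → T = S)
    {U : Set X} (hU : U ∈ S) : ∃ b ∈ S ∩ B, b ⊆ U := by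
  have := hS.generate_neBot
  set 𝒰 := Ultrafilter.of (generate S)
  have hS𝒰 : ∀ s ∈ S, s ∈ 𝒰 := fun s hs => Ultrafilter.of_le _ (mem_generate_of_mem hs)
  obtain ⟨G, -, hGB, rfl⟩ := hS.2.1 hU
  obtain ⟨b, hbG, hb𝒰⟩ := (Ultrafilter.finite_sUnion_mem_iff G.finite_toSet).mp (hS𝒰 _ hU)
  have hbS : b ∈ S :=
    hS.mem_of_mem_ultrafilter hmax 𝒰 hS𝒰 (mem_finUnions_of_mem (hGB hbG)) hb𝒰
  exact ⟨b, ⟨hbS, hGB hbG⟩, subset_sUnion_of_mem hbG⟩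

theorem maximal_centered_finUnions_general {X : Type*} (B : Set (Set X))
    (S : Set (Set X))
    (hS : IsCentered (finUnions B) S)
    (hmax : ∀ T : Set (Set X), IsCentered (finUnions B) T → S ⊆ T → T = S) :
    ∃ S₀ ⊆ S, S₀ ⊆ B ∧ IsCentered B S₀ ∧ ⋂₀ S₀ = ⋂₀ S := by
  have hball := fun {U} (hU : U ∈ S) => exists_ball_mem_subset_of_maximal hS hmax hU
  have hne : (S ∩ B).Nonempty := by
    obtain ⟨U, hU⟩ := hS.1
    obtain ⟨b, hb, -⟩ := hball hU
    exact ⟨b, hb⟩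
  refine ⟨S ∩ B, inter_subset_left, inter_subset_right,
    hS.mono inter_subset_left hne inter_subset_right, ?_⟩
  refine (sInter_subset_sInter inter_subset_left).antisymm' fun x hx U hU => ?_
  obtain ⟨b, hb, hbU⟩ := hball hU
  exact hbU (hx b hb)

theorem maximal_centered_finUnions {X : Type*} [Nonempty X] (B : Set (Set X))
    (hB : IsBallSpace B) (S : Set (Set X))
    (hS : IsCentered (finUnions B) S)
    (hmax : ∀ T : Set (Set X), IsCentered (finUnions B) T → S ⊆ T → T = S) :
    ∃ S₀ ⊆ S, S₀ ⊆ B ∧ IsCentered B S₀ ∧ ⋂₀ S₀ = ⋂₀ S :=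
  maximal_centered_finUnions_general B S hS hmax
end

section
/- Let (X, 𝓑) be a ball space satisfying S₁ᶜ, i.e., every centered system of balls in 𝓑 has nonempty intersection. Then the ball space (X, f-un(𝓑)) also satisfies S₁ᶜ: every centered system of balls in f-un(𝓑) has nonempty intersection. -/
open Set

/-- S₁ᶜ: every centered system of balls has nonempty intersection. -/
def S1c {X : Type*} (B : Set (Set X)) : Prop :=
  ∀ S, IsCentered B S → (⋂₀ S).Nonempty

/-
A centered system `S` of finite unions of balls generates a proper filter; extend it to an
ultrafilter `U`. Since `U` is prime, each finite union in `S` has one of its balls in `U`, and the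
balls lying in `U` form a centered system of `B`. By S₁ᶜ for `B` they share a point, which then
lies in every member of `S`.
-/

theorem IsCentered.generate_neBot_s4 {X : Type*} {B S : Set (Set X)} (hS : IsCentered B S) :
    (Filter.generate S).NeBot := by
  rw [Filter.generate_neBot_iff]
  intro t hts htfin
  obtain ⟨s, hs⟩ := hS.1
  have hst : (insert s t).Finite := htfin.insert s
  refine (hS.2.2 hst.toFinset (by simp) (by simpa using insert_subset hs hts)).mono ?_
  simpa using sInter_subset_sInter (subset_insert s t)

theorem Ultrafilter.exists_ball_subset_of_mem_finUnions {X : Type*} {B : Set (Set X)}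
    (U : Ultrafilter X) {s : Set X} (hs : s ∈ finUnions B) (hsU : s ∈ U) :
    ∃ b ∈ B, b ∈ U ∧ b ⊆ s := by
  obtain ⟨F, -, hFB, rfl⟩ := hs
  obtain ⟨b, hbF, hbU⟩ := (Ultrafilter.finite_sUnion_mem_iff F.finite_toSet).1 hsU
  exact ⟨b, hFB hbF, hbU, subset_sUnion_of_mem hbF⟩

theorem Ultrafilter.isCentered_balls_mem {X : Type*} {B : Set (Set X)} (U : Ultrafilter X)
    (hne : ∃ b ∈ B, b ∈ U) : IsCentered B {b | b ∈ B ∧ b ∈ U} := by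
  refine ⟨hne, fun b hb => hb.1, fun F _ hFU => ?_⟩
  exact U.nonempty_of_mem <| (Filter.sInter_mem F.finite_toSet).2 fun b hb => (hFU hb).2

theorem finUnions_S1c_general {X : Type*} (B : Set (Set X))
    (h : S1c B) : S1c (finUnions B) := by
  intro S hS
  have := hS.generate_neBot_s4
  set U := Ultrafilter.of (Filter.generate S)
  have hSU : ∀ s ∈ S, s ∈ U := fun s hs => Ultrafilter.of_le _ (Filter.GenerateSets.basic hs)
  have hball : ∀ s ∈ S, ∃ b ∈ B, b ∈ U ∧ b ⊆ s := fun s hs =>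
    U.exists_ball_subset_of_mem_finUnions (hS.2.1 hs) (hSU s hs)
  have hne : ∃ b ∈ B, b ∈ U := by
    obtain ⟨s, hs⟩ := hS.1
    obtain ⟨b, hbB, hbU, -⟩ := hball s hs
    exact ⟨b, hbB, hbU⟩
  obtain ⟨x, hx⟩ := h _ (U.isCentered_balls_mem hne)
  refine ⟨x, fun s hs => ?_⟩
  obtain ⟨b, hbB, hbU, hbs⟩ := hball s hs
  exact hbs (hx b ⟨hbB, hbU⟩)

theorem finUnions_S1c {X : Type*} [Nonempty X] (B : Set (Set X))
    (hB : IsBallSpace B) (h : S1c B) : S1c (finUnions B) :=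
  finUnions_S1c_general B h
end

section
/- For i ∈ ℕ let pᵢ denote the i-th prime number and define Bᵢ ⊆ ℝ by Bᵢ := (0, 1/pᵢ) \ { 1/pᵢʲ : j ∈ ℕ, pᵢʲ > pᵢ₊₁ }, and set 𝓑 := { Bᵢ : i ∈ ℕ }. Then (ℝ, 𝓑) is a spherically complete ball space (indeed, for i ≠ j the balls Bᵢ and Bⱼ are incomparable under inclusion, so every nest consists of a single ball), but the ball space (ℝ, f-un(𝓑)) is not spherically complete: the sets Bᵢ ∪ Bᵢ₊₁ = (0, 1/pᵢ) form a nest in f-un(𝓑) with empty intersection. -/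
open Set

/-- The `i`-th prime number. -/
noncomputable def pp (i : ℕ) : ℕ := Nat.nth Nat.Prime i

/-- `Bex i = (0, 1/pᵢ) \ { 1/pᵢʲ : j ∈ ℕ, pᵢʲ > pᵢ₊₁ }`. -/
noncomputable def Bex (i : ℕ) : Set ℝ :=
  Ioo (0 : ℝ) (1 / (pp i : ℝ)) \
    { x : ℝ | ∃ j : ℕ, ((pp i : ℝ)) ^ j > (pp (i + 1) : ℝ) ∧ x = 1 / ((pp i : ℝ)) ^ j }

/-
Distinct balls `Bᵢ`, `Bⱼ` are incomparable: for `i < j` the point `1/pⱼ` lies in `Bᵢ` but not below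
`1/pⱼ`, and for `i > j` a large power `1/pⱼᵐ` lies in `Bᵢ` (no power of `pᵢ` equals `pⱼᵐ`) but is
one of the points removed from `Bⱼ`. A nest in an antichain is a single ball, so `(ℝ, 𝓑)` is
spherically complete. On the other hand `Bᵢ ∪ Bᵢ₊₁` restores the points removed from `Bᵢ`, giving
`(0, 1/pᵢ)`, and these intervals shrink to the empty set.
-/

section BallSpace

variable {X : Type*} {B : Set (Set X)}

theorem sphComplete_of_isAntichain (hne : ∀ S ∈ B, S.Nonempty) (hB : IsAntichain (· ⊆ ·) B) :
    SphComplete B := by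
  rintro N ⟨⟨S, hS⟩, hNB, hchain⟩
  have hN : N = {S} :=
    (subsingleton_of_isChain_of_isAntichain hchain (hB.subset hNB)).eq_singleton_of_mem hS
  rw [hN, sInter_singleton]
  exact hne S (hNB hS)

theorem not_sphComplete_of_isNest_of_sInter_eq_empty {N : Set (Set X)} (hN : IsNest B N)
    (h : ⋂₀ N = ∅) : ¬ SphComplete B := fun hB =>
  (hB N hN).ne_empty h

theorem union_mem_finUnions {S T : Set X} (hS : S ∈ B) (hT : T ∈ B) : S ∪ T ∈ finUnions B := by
  classical
  refine ⟨{S, T}, Finset.insert_nonempty _ _, ?_, by simp⟩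
  simpa [insert_subset_iff] using ⟨hS, hT⟩

end BallSpace

theorem pp_prime (i : ℕ) : (pp i).Prime := Nat.prime_nth_prime i

theorem pp_strictMono : StrictMono pp := Nat.nth_strictMono Nat.infinite_setOfPred_prime

theorem pp_pos (i : ℕ) : (0 : ℝ) < pp i := by exact_mod_cast (pp_prime i).pos

theorem one_div_pp_strictAnti : StrictAnti fun i => 1 / (pp i : ℝ) := fun _ _ h =>
  one_div_lt_one_div_of_lt (pp_pos _) (by exact_mod_cast pp_strictMono h)

theorem ne_zero_of_pp_succ_lt_pow {i k : ℕ} (hk : (pp (i + 1) : ℝ) < (pp i : ℝ) ^ k) : k ≠ 0 := by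
  rintro rfl
  have : (1 : ℝ) < pp (i + 1) := by exact_mod_cast (pp_prime (i + 1)).one_lt
  rw [pow_zero] at hk
  linarith

theorem one_div_pp_pow_mem_Bex {i j m : ℕ} (hij : i ≠ j) (hm : m ≠ 0) (h : pp i < pp j ^ m) :
    1 / (pp j : ℝ) ^ m ∈ Bex i := by
  refine ⟨⟨by have := pp_pos j; positivity,
    one_div_lt_one_div_of_lt (pp_pos i) (by exact_mod_cast h)⟩, ?_⟩
  rintro ⟨k, hk, heq⟩
  have hk0 : k ≠ 0 := ne_zero_of_pp_succ_lt_pow hk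
  have hpow : pp i ^ k = pp j ^ m := by
    rw [div_eq_div_iff (pow_pos (pp_pos j) m).ne' (pow_pos (pp_pos i) k).ne'] at heq
    exact_mod_cast (one_mul _).symm.trans (heq.trans (one_mul _))
  exact hij (pp_strictMono.injective ((pp_prime i).pow_inj' (pp_prime j) hk0 hm hpow).1)

theorem Bex_not_subset_of_lt {i j : ℕ} (h : i < j) : ¬ Bex i ⊆ Bex j := by
  have hmem : 1 / (pp j : ℝ) ^ 1 ∈ Bex i :=
    one_div_pp_pow_mem_Bex h.ne one_ne_zero (by simpa using pp_strictMono h)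
  intro hsub
  simpa using (hsub hmem).1.2

theorem Bex_not_subset_of_gt {i j : ℕ} (h : j < i) : ¬ Bex i ⊆ Bex j := by
  have hlt : pp i < pp j ^ pp i := Nat.lt_pow_self (pp_prime j).one_lt
  have hmem : 1 / (pp j : ℝ) ^ pp i ∈ Bex i :=
    one_div_pp_pow_mem_Bex h.ne' (pp_prime i).ne_zero hlt
  have hexcluded : (pp (j + 1) : ℝ) < (pp j : ℝ) ^ pp i := by
    exact_mod_cast (pp_strictMono.monotone h).trans_lt hlt
  exact fun hsub => (hsub hmem).2 ⟨pp i, hexcluded, rfl⟩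

theorem Bex_not_subset {i j : ℕ} (h : i ≠ j) : ¬ Bex i ⊆ Bex j :=
  h.lt_or_gt.elim Bex_not_subset_of_lt Bex_not_subset_of_gt

theorem isAntichain_Bex : IsAntichain (· ⊆ ·) { S : Set ℝ | ∃ i : ℕ, S = Bex i } := by
  rintro _ ⟨i, rfl⟩ _ ⟨j, rfl⟩ hne
  exact Bex_not_subset fun h => hne (h ▸ rfl)

theorem Bex_nonempty (i : ℕ) : (Bex i).Nonempty :=
  ⟨_, one_div_pp_pow_mem_Bex (j := i + 1) (by omega) one_ne_zero
    (by simpa using pp_strictMono (Nat.lt_succ_self i))⟩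

theorem Bex_union (i : ℕ) : Bex i ∪ Bex (i + 1) = Ioo (0 : ℝ) (1 / (pp i : ℝ)) := by
  refine Subset.antisymm (union_subset sdiff_subset ?_) fun x hx => ?_
  · exact sdiff_subset.trans
      (Ioo_subset_Ioo_right (one_div_pp_strictAnti (Nat.lt_succ_self i)).le)
  · by_cases hexcluded : x ∈ Bex i
    · exact Or.inl hexcluded
    · obtain ⟨k, hk, rfl⟩ : ∃ k : ℕ, (pp i : ℝ) ^ k > pp (i + 1) ∧ x = 1 / (pp i : ℝ) ^ k := by
        by_contra hk
        exact hexcluded ⟨hx, hk⟩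
      exact Or.inr (one_div_pp_pow_mem_Bex (by omega) (ne_zero_of_pp_succ_lt_pow hk)
        (by exact_mod_cast hk))

theorem setOf_Bex_union_eq_range :
    { S : Set ℝ | ∃ i : ℕ, S = Bex i ∪ Bex (i + 1) } = range fun i => Ioo (0 : ℝ) (1 / pp i) := by
  ext S
  simp [Bex_union, eq_comm]

theorem iInter_Ioo_one_div_pp_eq_empty : ⋂ i, Ioo (0 : ℝ) (1 / pp i) = ∅ := by
  refine eq_empty_of_forall_notMem fun x hx => ?_
  obtain ⟨n, hn⟩ := exists_nat_one_div_lt (mem_iInter.1 hx 0).1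
  have hle : ((n + 1 : ℕ) : ℝ) ≤ pp (n + 1) := by exact_mod_cast pp_strictMono.le_apply
  have := (mem_iInter.1 hx (n + 1)).2
  have : 1 / (pp (n + 1) : ℝ) ≤ 1 / (n + 1) :=
    one_div_le_one_div_of_le (by positivity) (by exact_mod_cast hle)
  linarith

theorem isNest_setOf_Bex_union :
    IsNest (finUnions { S : Set ℝ | ∃ i : ℕ, S = Bex i })
      { S : Set ℝ | ∃ i : ℕ, S = Bex i ∪ Bex (i + 1) } := by
  refine ⟨⟨_, 0, rfl⟩, ?_, ?_⟩
  · rintro _ ⟨i, rfl⟩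
    exact union_mem_finUnions ⟨i, rfl⟩ ⟨i + 1, rfl⟩
  · rw [setOf_Bex_union_eq_range]
    exact Antitone.isChain_range fun i j hij =>
      Ioo_subset_Ioo_right (one_div_pp_strictAnti.antitone hij)

theorem sInter_setOf_Bex_union_eq_empty :
    ⋂₀ { S : Set ℝ | ∃ i : ℕ, S = Bex i ∪ Bex (i + 1) } = ∅ := by
  rw [setOf_Bex_union_eq_range, sInter_range, iInter_Ioo_one_div_pp_eq_empty]

theorem finUnions_not_sphComplete_example :
    SphComplete { S : Set ℝ | ∃ i : ℕ, S = Bex i } ∧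
    (∀ i j : ℕ, i ≠ j → ¬ Bex i ⊆ Bex j) ∧
    (∀ i : ℕ, Bex i ∪ Bex (i + 1) = Ioo (0 : ℝ) (1 / (pp i : ℝ))) ∧
    IsNest (finUnions { S : Set ℝ | ∃ i : ℕ, S = Bex i })
      { S : Set ℝ | ∃ i : ℕ, S = Bex i ∪ Bex (i + 1) } ∧
    ⋂₀ { S : Set ℝ | ∃ i : ℕ, S = Bex i ∪ Bex (i + 1) } = ∅ ∧
    ¬ SphComplete (finUnions { S : Set ℝ | ∃ i : ℕ, S = Bex i }) :=
  ⟨sphComplete_of_isAntichain (by rintro _ ⟨i, rfl⟩; exact Bex_nonempty i) isAntichain_Bex,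
    fun _ _ => Bex_not_subset, Bex_union, isNest_setOf_Bex_union, sInter_setOf_Bex_union_eq_empty,
    not_sphComplete_of_isNest_of_sInter_eq_empty isNest_setOf_Bex_union
      sInter_setOf_Bex_union_eq_empty⟩
end

section
/- Let (X, 𝓑) and (X', 𝓑') be ball spaces and let f : X → X' be ball continuous. If (X, 𝓑) is spherically complete, then (X', 𝓑') is spherically complete. -/
open Set

/-- Ball continuity: preimages of balls are balls. -/
def BallContinuous {X X' : Type*} (B : Set (Set X)) (B' : Set (Set X')) (f : X → X') : Prop :=
  ∀ b' ∈ B', f ⁻¹' b' ∈ B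

theorem IsNest.preimage_image {X X' : Type*} {B : Set (Set X)} {B' : Set (Set X')} {f : X → X'}
    (hf : BallContinuous B B' f) {N : Set (Set X')} (hN : IsNest B' N) :
    IsNest B ((f ⁻¹' ·) '' N) := by
  obtain ⟨hne, hsub, hchain⟩ := hN
  refine ⟨hne.image _, ?_, ?_⟩
  · rintro _ ⟨b, hb, rfl⟩
    exact hf b (hsub hb)
  · exact hchain.image_of_map_rel (α := Set X') (β := Set X) (· ⊆ ·) (· ⊆ ·) (f ⁻¹' ·)
      fun _ _ ↦ preimage_mono

theorem sInter_image_preimage {X X' : Type*} (f : X → X') (N : Set (Set X')) :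
    ⋂₀ ((f ⁻¹' ·) '' N) = f ⁻¹' ⋂₀ N := by
  rw [sInter_image, preimage_sInter]

theorem ballContinuous_sphComplete_general {X X' : Type*} (B : Set (Set X)) (B' : Set (Set X'))
    (f : X → X') (hf : BallContinuous B B' f) (h : SphComplete B) : SphComplete B' := by
  intro N hN
  have hpre : (f ⁻¹' ⋂₀ N).Nonempty := sInter_image_preimage f N ▸ h _ (hN.preimage_image hf)
  exact nonempty_of_nonempty_preimage hpre

theorem ballContinuous_sphComplete {X X' : Type*} (B : Set (Set X)) (B' : Set (Set X'))
    (hB : IsBallSpace B) (hB' : IsBallSpace B') (f : X → X')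
    (hf : BallContinuous B B' f) (h : SphComplete B) : SphComplete B' :=
  ballContinuous_sphComplete_general B B' f hf h
end

section
/- Let (X, 𝓑) and (X', 𝓑') be ball spaces and let f : X → X' be a surjective function such that every ball in 𝓑 is the preimage under f of some ball in 𝓑', i.e., 𝓑 ⊆ { f⁻¹(B') : B' ∈ 𝓑' }. If (X', 𝓑') is spherically complete, then (X, 𝓑) is spherically complete. -/
open Set

/-! Since `f` is surjective, `b' ↦ f ⁻¹' b'` is an order embedding of `Set X'` into `Set X`, so a
nest `N` of balls of `X` is the image of the nest of those balls `b'` of `X'` with `f ⁻¹' b' ∈ N`.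
A point `x'` in the intersection of that nest has every preimage `x` in the intersection of `N`. -/

theorem Function.Surjective.isChain_preimage_preimage {X X' : Type*} {f : X → X'}
    (hf : Function.Surjective f) {N : Set (Set X)} (hN : IsChain (· ⊆ ·) N) :
    IsChain (· ⊆ ·) {b' : Set X' | f ⁻¹' b' ∈ N} :=
  hN.preimage _ _ _ hf.preimage_injective fun _ _ => hf.preimage_subset_preimage_iff.mp

theorem IsNest.pushforward {X X' : Type*} {B : Set (Set X)} {B' : Set (Set X')} {f : X → X'}
    (hsurj : Function.Surjective f) (hf : B ⊆ { S | ∃ b' ∈ B', S = f ⁻¹' b' })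
    {N : Set (Set X)} (hN : IsNest B N) : IsNest B' {b' ∈ B' | f ⁻¹' b' ∈ N} := by
  obtain ⟨⟨b, hb⟩, hNB, hchain⟩ := hN
  obtain ⟨b', hb', rfl⟩ := hf (hNB hb)
  exact ⟨⟨b', hb', hb⟩, fun _ h => h.1,
    (hsurj.isChain_preimage_preimage hchain).mono fun _ h => h.2⟩

theorem preimage_sphComplete_general {X X' : Type*} (B : Set (Set X)) (B' : Set (Set X'))
    (f : X → X')
    (hsurj : Function.Surjective f)
    (hf : B ⊆ { S | ∃ b' ∈ B', S = f ⁻¹' b' })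
    (h : SphComplete B') : SphComplete B := by
  intro N hN
  obtain ⟨x', hx'⟩ := h _ (hN.pushforward hsurj hf)
  obtain ⟨x, rfl⟩ := hsurj x'
  refine ⟨x, fun b hb => ?_⟩
  obtain ⟨b', hb', rfl⟩ := hf (hN.2.1 hb)
  exact hx' b' ⟨hb', hb⟩

theorem preimage_sphComplete {X X' : Type*} (B : Set (Set X)) (B' : Set (Set X'))
    (hB : IsBallSpace B) (hB' : IsBallSpace B') (f : X → X')
    (hsurj : Function.Surjective f)
    (hf : B ⊆ { S | ∃ b' ∈ B', S = f ⁻¹' b' })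
    (h : SphComplete B') : SphComplete B :=
  preimage_sphComplete_general B B' f hsurj hf h
end

section
/- Let (X, 𝓑) and (X', 𝓑') be ball spaces and let f : X → X' be ball closed (the image f(B) of every ball B ∈ 𝓑 belongs to 𝓑') and finite-to-one (for every x' ∈ X' the fiber f⁻¹({x'}) is finite). If (X', 𝓑') is spherically complete, then (X, 𝓑) is spherically complete. -/
/-!
The images `f '' b` of a nest of balls form a nest in `B'`, so they share a point `x'`. Every
ball of the nest then meets the finite fiber `F = f ⁻¹' {x'}`, and the traces `F ∩ b` form a
finite chain of nonempty sets; its least element is nonempty and lies in every ball.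
-/

open Set

theorem IsNest.image {X X' : Type*} {B N : Set (Set X)} {B' : Set (Set X')} {f : X → X'}
    (hN : IsNest B N) (hclosed : ∀ b ∈ B, f '' b ∈ B') : IsNest B' (image f '' N) :=
  ⟨hN.1.image _, image_subset_iff.2 fun b hb => hclosed b (hN.2.1 hb),
    hN.2.2.image_of_map_rel _ _ _ fun _ _ hab => image_mono hab⟩

theorem IsChain.inter_sInter_nonempty_of_finite {X : Type*} {N : Set (Set X)} {F : Set X}
    (hN : IsChain (· ⊆ ·) N) (hNne : N.Nonempty) (hF : F.Finite)
    (hmeet : ∀ b ∈ N, (F ∩ b).Nonempty) : (F ∩ ⋂₀ N).Nonempty := by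
  have htraces : ((F ∩ ·) '' N).Finite :=
    hF.finite_subsets.subset (image_subset_iff.2 fun _ _ => inter_subset_left)
  obtain ⟨b₀, hb₀, hmin⟩ := Finite.exists_minimalFor' (F ∩ ·) N htraces hNne
  have hleast : ∀ b ∈ N, F ∩ b₀ ⊆ F ∩ b := fun b hb =>
    (hN.total hb₀ hb).elim (inter_subset_inter_right F) fun hbb₀ =>
      hmin hb (inter_subset_inter_right F hbb₀)
  obtain ⟨x, hxF, hxb₀⟩ := hmeet b₀ hb₀
  exact ⟨x, hxF, mem_sInter.2 fun b hb => (hleast b hb ⟨hxF, hxb₀⟩).2⟩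

theorem ballClosed_finiteToOne_sphComplete_general {X X' : Type*}
    (B : Set (Set X)) (B' : Set (Set X'))
    (f : X → X')
    (hclosed : ∀ b ∈ B, f '' b ∈ B')
    (hfin : ∀ x' : X', (f ⁻¹' {x'}).Finite)
    (h : SphComplete B') : SphComplete B := by
  intro N hN
  obtain ⟨x', hx'⟩ := h _ (hN.image hclosed)
  have hmeet : ∀ b ∈ N, (f ⁻¹' {x'} ∩ b).Nonempty := fun b hb => by
    obtain ⟨x, hx, hfx⟩ := mem_sInter.1 hx' _ (mem_image_of_mem _ hb)
    exact ⟨x, hfx, hx⟩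
  exact (hN.2.2.inter_sInter_nonempty_of_finite hN.1 (hfin x') hmeet).mono inter_subset_right

theorem ballClosed_finiteToOne_sphComplete {X X' : Type*}
    (B : Set (Set X)) (B' : Set (Set X'))
    (hB : IsBallSpace B) (hB' : IsBallSpace B') (f : X → X')
    (hclosed : ∀ b ∈ B, f '' b ∈ B')
    (hfin : ∀ x' : X', (f ⁻¹' {x'}).Finite)
    (h : SphComplete B') : SphComplete B :=
  ballClosed_finiteToOne_sphComplete_general B B' f hclosed hfin h
end

section
/- Let I be a nonempty index set and let (Yᵢ, 𝓑ᵢ), i ∈ I, be ball spaces. Then the product ball space ∏ᵢ (Yᵢ, 𝓑ᵢ) is spherically complete if and only if every (Yᵢ, 𝓑ᵢ), i ∈ I, is spherically complete. -/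
open Set

/-- The balls of the product ball space: the sets `∏ᵢ bᵢ` such that for some `k`,
`bₖ ∈ Bₖ` and `bᵢ = Yᵢ` for all `i ≠ k`. -/
def prodBalls {I : Type*} {Y : I → Type*} (B : ∀ i, Set (Set (Y i))) :
    Set (Set (∀ i, Y i)) :=
  { S | ∃ (b : ∀ i, Set (Y i)) (k : I), b k ∈ B k ∧ (∀ i, i ≠ k → b i = univ) ∧
      S = { x | ∀ i, x i ∈ b i } }


/-! The balls of the product are exactly the cylinders `eval k ⁻¹' b` over balls `b` of a factor.
A nest of balls in a factor lifts to the nest of its cylinders. Conversely, a nest of cylinders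
splits into one nest per coordinate, and a point whose coordinates lie in the intersections of
these nests (arbitrary where the nest is empty) lies in every ball of the original nest. -/

open Function

theorem IsBallSpace.nonempty {X : Type*} {B : Set (Set X)} (hB : IsBallSpace B) : Nonempty X :=
  let ⟨b, hb⟩ := hB.1
  (hB.2 b hb).to_subtype.map Subtype.val

theorem SphComplete.of_preimage_mem {X Z : Type*} {B : Set (Set X)} {C : Set (Set Z)} {f : Z → X}
    (hC : SphComplete C) (hf : ∀ b ∈ B, f ⁻¹' b ∈ C) : SphComplete B := by
  rintro N ⟨hne, hNB, hchain⟩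
  have hnest : IsNest C (preimage f '' N) :=
    ⟨hne.image _, image_subset_iff.2 fun b hb => hf b (hNB hb),
      hchain.image_of_map_rel _ (· ⊆ ·) (preimage f) fun _ _ => preimage_mono⟩
  obtain ⟨z, hz⟩ := hC _ hnest
  rw [sInter_image, ← preimage_sInter] at hz
  exact ⟨f z, hz⟩

section Product

variable {I : Type*} {Y : I → Type*} {B : ∀ i, Set (Set (Y i))}

theorem mem_prodBalls {S : Set (∀ i, Y i)} :
    S ∈ prodBalls B ↔ ∃ k, ∃ b ∈ B k, S = eval k ⁻¹' b := by
  classical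
  constructor
  · rintro ⟨b, k, hbk, hb, rfl⟩
    refine ⟨k, b k, hbk, ext fun x => ⟨fun hx => hx k, fun hx i => ?_⟩⟩
    rcases eq_or_ne i k with rfl | hik
    · exact hx
    · simp [hb i hik]
  · rintro ⟨k, b, hb, rfl⟩
    refine ⟨update (fun _ => univ) k b, k, by simpa, fun i hi => update_of_ne hi _ _, ?_⟩
    rw [← univ_pi_update_univ]
    ext
    simp

theorem sphComplete_prodBalls [∀ i, Nonempty (Y i)] (hB : ∀ i, SphComplete (B i)) :
    SphComplete (prodBalls B) := by
  rintro N ⟨hne, hNB, hchain⟩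
  -- `eval i` is surjective, so taking preimages under it reflects inclusion
  set slice : ∀ i, Set (Set (Y i)) := fun i => B i ∩ preimage (eval i) ⁻¹' N
  have hslice : ∀ i, IsChain (· ⊆ ·) (slice i) := fun i =>
    (hchain.preimage _ _ _ (surjective_eval i).preimage_injective
      fun _ _ => (surjective_eval i).preimage_subset_preimage_iff.1).mono inter_subset_right
  have hpoint : ∀ i, ∃ y : Y i, (slice i).Nonempty → y ∈ ⋂₀ slice i := fun i => by
    by_cases h : (slice i).Nonempty
    · obtain ⟨y, hy⟩ := hB i (slice i) ⟨h, inter_subset_left, hslice i⟩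
      exact ⟨y, fun _ => hy⟩
    · exact ⟨Classical.arbitrary _, fun h' => absurd h' h⟩
  choose x hx using hpoint
  refine ⟨x, fun S hS => ?_⟩
  obtain ⟨k, b, hb, rfl⟩ := mem_prodBalls.1 (hNB hS)
  exact hx k ⟨b, hb, hS⟩ b ⟨hb, hS⟩

end Product

theorem prod_sphComplete_iff_general {I : Type*} {Y : I → Type*}
    (B : ∀ i, Set (Set (Y i))) (hB : ∀ i, IsBallSpace (B i)) :
    SphComplete (prodBalls B) ↔ ∀ i, SphComplete (B i) := by
  have := fun i => (hB i).nonempty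
  exact ⟨fun h i => h.of_preimage_mem fun b hb => mem_prodBalls.2 ⟨i, b, hb, rfl⟩,
    sphComplete_prodBalls⟩

theorem prod_sphComplete_iff {I : Type*} [Nonempty I] {Y : I → Type*}
    (B : ∀ i, Set (Set (Y i))) (hB : ∀ i, IsBallSpace (B i)) :
    SphComplete (prodBalls B) ↔ ∀ i, SphComplete (B i) :=
  prod_sphComplete_iff_general B hB
end

section
/- Let I be a nonempty index set and let (Yᵢ, 𝓑ᵢ), i ∈ I, be ball spaces. If at least one of the ball spaces (Yᵢ, 𝓑ᵢ) is spherically complete, then the coproduct ball space ∐ᵢ (Yᵢ, 𝓑ᵢ) is spherically complete. -/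
open Set

/-- The balls of the coproduct ball space on the disjoint union `Σ i, Y i`:
the sets `⋃ᵢ ιᵢ(bᵢ)` with `bᵢ ∈ Bᵢ` for every `i`. -/
def coprodBalls {I : Type*} {Y : I → Type*} (B : ∀ i, Set (Set (Y i))) :
    Set (Set (Σ i, Y i)) :=
  { S | ∃ b : ∀ i, Set (Y i), (∀ i, b i ∈ B i) ∧ S = { p : Σ i, Y i | p.2 ∈ b p.1 } }

/-! Pulling a nest of coproduct balls back along `ιₖ` gives a nest in the spherically complete
summand `Yₖ`; the image of a point in its intersection lies in every ball of the original nest. -/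

section Preimage

variable {X Y : Type*} {B : Set (Set X)} {C : Set (Set Y)} {f : Y → X}

theorem IsNest.preimage (hf : ∀ S ∈ B, f ⁻¹' S ∈ C) {N : Set (Set X)} (hN : IsNest B N) :
    IsNest C (preimage f '' N) :=
  ⟨hN.1.image _, image_subset_iff.2 fun S hS => hf S (hN.2.1 hS),
    monotone_preimage.isChain_image hN.2.2⟩

theorem SphComplete.of_preimage (hC : SphComplete C) (hf : ∀ S ∈ B, f ⁻¹' S ∈ C) :
    SphComplete B := by
  intro N hN
  obtain ⟨y, hy⟩ := hC _ (hN.preimage hf)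
  exact ⟨f y, fun S hS => hy _ (mem_image_of_mem _ hS)⟩

end Preimage

theorem preimage_sigmaMk_mem_of_mem_coprodBalls {I : Type*} {Y : I → Type*}
    {B : ∀ i, Set (Set (Y i))} {S : Set (Σ i, Y i)} (hS : S ∈ coprodBalls B) (k : I) :
    Sigma.mk k ⁻¹' S ∈ B k := by
  obtain ⟨b, hb, rfl⟩ := hS
  exact hb k

theorem coprod_sphComplete_general {I : Type*} {Y : I → Type*}
    (B : ∀ i, Set (Set (Y i)))
    (k : I) (hk : SphComplete (B k)) :
    SphComplete (coprodBalls B) :=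
  hk.of_preimage fun _ hS => preimage_sigmaMk_mem_of_mem_coprodBalls hS k

theorem coprod_sphComplete {I : Type*} [Nonempty I] {Y : I → Type*}
    (B : ∀ i, Set (Set (Y i))) (hB : ∀ i, IsBallSpace (B i))
    (k : I) (hk : SphComplete (B k)) :
    SphComplete (coprodBalls B) :=
  coprod_sphComplete_general B k hk
end

section
/- Let X₁ = ℕ with 𝓑₁ the collection of all final segments {m ∈ ℕ : m ≥ n} for n ∈ ℕ, and let X₂ be the set of all countable ordinals (the ordinals below ω₁) with 𝓑₂ the collection of all final segments {β ∈ X₂ : β ≥ α} for α ∈ X₂. Then neither (X₁, 𝓑₁) nor (X₂, 𝓑₂) is spherically complete, but the coproduct ball space ∐ᵢ∈{1,2} (Xᵢ, 𝓑ᵢ) is spherically complete. -/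
open Set

/-- The countable ordinals, i.e. the ordinals below `ω₁`. -/
def CountableOrd : Type 1 := { o : Ordinal.{0} // o.card ≤ Cardinal.aleph0 }

noncomputable instance : LinearOrder CountableOrd :=
  inferInstanceAs (LinearOrder { o : Ordinal.{0} // o.card ≤ Cardinal.aleph0 })

/-- The final segments of `ℕ`. -/
def B1 : Set (Set ℕ) := { S | ∃ n : ℕ, S = Ici n }

/-- The final segments of the set of countable ordinals. -/
def B2 : Set (Set CountableOrd) := { S | ∃ α : CountableOrd, S = Ici α }

/-- The balls of the coproduct ball space of `(ℕ, B1)` and `(CountableOrd, B2)`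
on the disjoint union `ℕ ⊕ CountableOrd`. -/
def coB : Set (Set (ℕ ⊕ CountableOrd)) :=
  { S | ∃ (b₁ : Set ℕ) (b₂ : Set CountableOrd), b₁ ∈ B1 ∧ b₂ ∈ B2 ∧
      S = Sum.inl '' b₁ ∪ Sum.inr '' b₂ }

/-!
A final-segment ball space on a linear order without maximum is never spherically complete:
the nest of all balls has empty intersection. In the coproduct, a ball is a pair of final
segments `[n, ∞) ⊔ [α, ∞)`. If the ℕ-parts of a nest are bounded, some `m` lies in every
ball. Otherwise pick balls `g k` of the nest avoiding `k`; any ball `[k, ∞) ⊔ [α, ∞)` of the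
nest must then contain `g k`, so an upper bound of the countably many ordinal parts of the
`g k`, which exists because `ω₁` has uncountable cofinality, lies in every ball.
-/

open Ordinal Cardinal

theorem Ordinal.card_le_aleph0_iff_lt_omega_one {o : Ordinal} : o.card ≤ ℵ₀ ↔ o < ω₁ := by
  rw [lt_omega_iff_card_lt, lt_aleph_one_iff]

namespace CountableOrd

instance : Nonempty CountableOrd := ⟨⟨0, by simp⟩⟩

instance : NoMaxOrder CountableOrd where
  exists_gt a := by
    have ha : a.1 < ω₁ := card_le_aleph0_iff_lt_omega_one.1 a.2
    have hlim : Order.IsSuccLimit ω₁ := by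
      rw [← ord_aleph]; exact isSuccLimit_ord aleph0_lt_aleph_one.le
    exact ⟨⟨Order.succ a.1, card_le_aleph0_iff_lt_omega_one.2 (hlim.succ_lt ha)⟩, Order.lt_succ a.1⟩

theorem bddAbove_range (f : ℕ → CountableOrd) : BddAbove (range f) := by
  have hsup : ⨆ n, (f n).1 < ω₁ :=
    iSup_lt_omega_one fun n => card_le_aleph0_iff_lt_omega_one.1 (f n).2
  exact ⟨⟨_, card_le_aleph0_iff_lt_omega_one.2 hsup⟩,
    by rintro _ ⟨n, rfl⟩; exact le_ciSup Ordinal.bddAbove_of_small n⟩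

end CountableOrd

theorem not_sphComplete_Ici {α : Type*} [LinearOrder α] [NoMaxOrder α] [Nonempty α] :
    ¬ SphComplete {S : Set α | ∃ a, S = Ici a} := by
  intro h
  have hnest : IsNest {S : Set α | ∃ a, S = Ici a} (range Ici) :=
    ⟨range_nonempty _, by rintro _ ⟨a, rfl⟩; exact ⟨a, rfl⟩, antitone_Ici.isChain_range⟩
  obtain ⟨x, hx⟩ := h _ hnest
  obtain ⟨y, hxy⟩ := exists_gt x
  exact hxy.not_ge (hx _ ⟨y, rfl⟩)

theorem sphComplete_coprod_Ici_nat {β : Type*} [Preorder β]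
    (hβ : ∀ f : ℕ → β, BddAbove (range f)) :
    SphComplete {S : Set (ℕ ⊕ β) | ∃ (n : ℕ) (b : β), S = Sum.inl '' Ici n ∪ Sum.inr '' Ici b} := by
  rintro N ⟨-, hNB, hN⟩
  by_cases hbdd : ∃ m : ℕ, ∀ S ∈ N, Sum.inl m ∈ S
  · obtain ⟨m, hm⟩ := hbdd
    exact ⟨Sum.inl m, hm⟩
  push Not at hbdd
  choose g hgN hg using hbdd
  choose n b hgnb using fun m => hNB (hgN m)
  obtain ⟨c, hc⟩ := hβ b
  refine ⟨Sum.inr c, fun S hS => ?_⟩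
  obtain ⟨k, a, rfl⟩ := hNB hS
  have hgk : g k ⊆ _ := (hN.total (hgN k) hS).resolve_right
    fun h => hg k (h (Or.inl ⟨k, self_mem_Ici, rfl⟩))
  exact hgk (by rw [hgnb k]; exact Or.inr ⟨c, hc ⟨k, rfl⟩, rfl⟩)

theorem coB_eq :
    coB = {S | ∃ (n : ℕ) (b : CountableOrd), S = Sum.inl '' Ici n ∪ Sum.inr '' Ici b} := by
  ext S
  simp [coB, B1, B2]

theorem coprod_sphComplete_converse_fails :
    ¬ SphComplete B1 ∧ ¬ SphComplete B2 ∧ SphComplete coB :=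
  ⟨not_sphComplete_Ici, not_sphComplete_Ici,
    coB_eq ▸ sphComplete_coprod_Ici_nat CountableOrd.bddAbove_range⟩
end

section
/- Let G be a linearly ordered abelian group. Assume that the order ball space of G (whose balls are all closed bounded intervals [a,b] with a ≤ b) is spherically complete, and that the ultrametric ball space of G (whose balls are all ultrametric balls B(a,c) = { x ∈ G : ∃ n ∈ ℕ, |x − a| ≤ n·|c| } with a, c ∈ G) is spherically complete. Then the ball space of all bar-bells of G, i.e., all sets of the form B(a,c) ∪ [a,b] ∪ B(b,d) with a, b, c, d ∈ G and a ≤ b, is spherically complete. -/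
open Set

/-- The ultrametric ball `B(a,c) = { x | ∃ n ∈ ℕ, |x − a| ≤ n·|c| }` of the natural
valuation of a linearly ordered abelian group. -/
def umBall {G : Type*} [AddCommGroup G] [LinearOrder G] [IsOrderedAddMonoid G] (a c : G) : Set G :=
  { x | ∃ n : ℕ, |x - a| ≤ n • |c| }

/-- The order ball space: all closed bounded intervals `[a,b]` with `a ≤ b`. -/
def orderBalls (G : Type*) [AddCommGroup G] [LinearOrder G] [IsOrderedAddMonoid G] : Set (Set G) :=
  { S | ∃ a b : G, a ≤ b ∧ S = Icc a b }

/-- The ultrametric ball space: all ultrametric balls `B(a,c)`. -/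
def umBalls (G : Type*) [AddCommGroup G] [LinearOrder G] [IsOrderedAddMonoid G] : Set (Set G) :=
  { S | ∃ a c : G, S = umBall a c }

/-- The bar-bells: sets of the form `B(a,c) ∪ [a,b] ∪ B(b,d)` with `a ≤ b`. -/
def barBells (G : Type*) [AddCommGroup G] [LinearOrder G] [IsOrderedAddMonoid G] : Set (Set G) :=
  { S | ∃ a b c d : G, a ≤ b ∧ S = umBall a c ∪ Icc a b ∪ umBall b d }

/-!
Suppose a nest `N` of bar-bells has empty intersection. If every member of `N` contains an
ultrametric ball that in turn contains a member of `N`, these balls form a nest of ultrametric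
balls, and a common point of theirs lies in every member of `N`.

Otherwise some `S₁ ∈ N` contains no such ball. Take `T = B(a,c) ∪ [a,b] ∪ B(b,d)` in `N` below
`S₁`. Bar-bells are order-convex and `a ∉ ⋂₀ N`, so some member `S ⊆ T` lies entirely on one side
of `a`. It cannot lie left of `a`: then `S ⊆ B(a,c) ∪ B(b,d)`, and this union is a single ball if
the two balls meet and otherwise `S ⊆ B(a,c)`; either way `S` would lie in a ball inside `S₁`.
The same holds at `b`, so some member of `N` lies strictly between `a` and `b`. By Zorn's lemma
there is a chain of members of `N`, each lying strictly inside the interval of the previous one,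
that is coinitial in `N`; its intervals `[a,b]` form a nest of order balls, and a common point of theirs
lies in every member of `N`.
-/

namespace Set.OrdConnected

variable {X : Type*} [LinearOrder X] {s t : Set X} {x : X}

theorem union_of_mem (hs : s.OrdConnected) (ht : t.OrdConnected) (hxs : x ∈ s) (hxt : x ∈ t) :
    (s ∪ t).OrdConnected :=
  ordConnected_of_uIcc_subset_left fun _ hy => hy.elim
    (fun hy => (hs.uIcc_subset hxs hy).trans subset_union_left)
    (fun hy => (ht.uIcc_subset hxt hy).trans subset_union_right)

theorem subset_Iio_or_subset_Ioi (hs : s.OrdConnected) (hx : x ∉ s) :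
    s ⊆ Iio x ∨ s ⊆ Ioi x := by
  by_contra! h
  obtain ⟨⟨y, hy, hxy⟩, ⟨z, hz, hzx⟩⟩ := And.imp not_subset.1 not_subset.1 h
  exact hx (hs.out hz hy ⟨not_lt.1 hzx, not_lt.1 hxy⟩)

end Set.OrdConnected

section Nest

variable {X : Type*} {N : Set (Set X)}

theorem IsChain.exists_mem_subset_subset (hN : IsChain (· ⊆ ·) N) {A B : Set X} (hA : A ∈ N)
    (hB : B ∈ N) : ∃ C ∈ N, C ⊆ A ∧ C ⊆ B :=
  (hN.total hA hB).elim (fun h => ⟨A, hA, subset_rfl, h⟩) fun h => ⟨B, hB, h, subset_rfl⟩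

theorem sInter_nonempty_of_forall_exists_subset {M : Set (Set X)} (hM : (⋂₀ M).Nonempty)
    (h : ∀ S ∈ N, ∃ W ∈ M, W ⊆ S) : (⋂₀ N).Nonempty :=
  let ⟨z, hz⟩ := hM
  ⟨z, fun S hS => let ⟨W, hW, hWS⟩ := h S hS; hWS (hz W hW)⟩

theorem exists_subset_Iio_or_Ioi [LinearOrder X] (hN : IsChain (· ⊆ ·) N)
    (hconn : ∀ S ∈ N, S.OrdConnected) (hempty : ⋂₀ N = ∅) {T : Set X} (hT : T ∈ N) (x : X) :
    ∃ S ∈ N, S ⊆ T ∧ (S ⊆ Iio x ∨ S ⊆ Ioi x) := by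
  obtain ⟨S, hS, hxS⟩ : ∃ S ∈ N, x ∉ S := by
    by_contra! h
    exact notMem_empty x (hempty ▸ mem_sInter.2 h)
  obtain ⟨S', hS', hS'S, hS'T⟩ := hN.exists_mem_subset_subset hS hT
  exact ⟨S', hS', hS'T, (hconn S' hS').subset_Iio_or_subset_Ioi fun hx => hxS (hS'S hx)⟩

end Nest

section NestedIntervals

variable {X : Type*} [Preorder X] {N : Set (Set X)} {a b : Set X → X}

theorem exists_mem_subset_Ioo_of_forall_not_subset (hN : IsChain (· ⊆ ·) N)
    (hsucc : ∀ T ∈ N, ∃ T' ∈ N, T' ⊆ Ioo (a T) (b T)) {C : Set (Set X)} (hCN : C ⊆ N)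
    (hC : IsChain (fun T T' => T' ⊆ Ioo (a T) (b T)) C) {S : Set X} (hS : S ∈ N)
    (hCS : ∀ T ∈ C, ¬T ⊆ S) : ∃ T' ∈ N, T' ⊆ S ∧ ∀ T ∈ C, T' ⊆ Ioo (a T) (b T) := by
  have hSC : ∀ T ∈ C, S ⊆ T := fun T hT => (hN.total hS (hCN hT)).resolve_right (hCS T hT)
  by_cases hlast : ∃ t ∈ C, ∀ T ∈ C, ¬T ⊆ Ioo (a t) (b t)
  · obtain ⟨t, ht, htlast⟩ := hlast
    obtain ⟨T', hT', hT't⟩ := hsucc t (hCN ht)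
    obtain ⟨T'', hT'', hT''S, hT''T'⟩ := hN.exists_mem_subset_subset hS hT'
    refine ⟨T'', hT'', hT''S, fun T hT => ?_⟩
    rcases eq_or_ne T t with rfl | hne
    · exact hT''T'.trans hT't
    · exact (hT''S.trans (hSC t ht)).trans ((hC hT ht hne).resolve_right (htlast T hT))
  · push Not at hlast
    refine ⟨S, hS, subset_rfl, fun T hT => ?_⟩
    obtain ⟨T', hT', hT'T⟩ := hlast T hT
    exact (hSC T' hT').trans hT'T

theorem exists_isChain_subset_Ioo_coinitial (hN : IsChain (· ⊆ ·) N)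
    (hsucc : ∀ T ∈ N, ∃ T' ∈ N, T' ⊆ Ioo (a T) (b T)) :
    ∃ C ⊆ N, IsChain (fun T T' => T' ⊆ Ioo (a T) (b T)) C ∧ ∀ S ∈ N, ∃ T ∈ C, T ⊆ S := by
  obtain ⟨C, hC⟩ := zorn_subset {C | C ⊆ N ∧ IsChain (fun T T' => T' ⊆ Ioo (a T) (b T)) C}
    fun cs hcs hchain => ⟨⋃₀ cs, ⟨sUnion_subset fun C hC => (hcs hC).1,
      (pairwise_sUnion hchain.directedOn).2 fun C hC => (hcs hC).2⟩,
      fun _ => subset_sUnion_of_mem⟩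
  refine ⟨C, hC.1.1, hC.1.2, fun S hS => ?_⟩
  by_contra! hCS
  obtain ⟨T', hT', hT'S, hT'C⟩ :=
    exists_mem_subset_Ioo_of_forall_not_subset hN hsucc hC.1.1 hC.1.2 hS hCS
  have hinsert : insert T' C ∈ {C | C ⊆ N ∧ IsChain (fun T T' => T' ⊆ Ioo (a T) (b T)) C} :=
    ⟨insert_subset hT' hC.1.1, hC.1.2.insert fun T hT _ => Or.inr (hT'C T hT)⟩
  exact hCS T' (hC.2 hinsert (subset_insert _ _) (mem_insert _ _)) hT'S

end NestedIntervals

section OrderedGroup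

variable {G : Type*} [AddCommGroup G] [LinearOrder G] [IsOrderedAddMonoid G]

theorem sInter_nonempty_of_forall_Icc_subset (ho : SphComplete (orderBalls G))
    {N : Set (Set G)} (hNe : N.Nonempty) (hN : IsChain (· ⊆ ·) N) {a b : Set G → G}
    (hab : ∀ T ∈ N, a T ≤ b T) (hIcc : ∀ T ∈ N, Icc (a T) (b T) ⊆ T)
    (hsucc : ∀ T ∈ N, ∃ T' ∈ N, T' ⊆ Ioo (a T) (b T)) : (⋂₀ N).Nonempty := by
  obtain ⟨C, hCN, hC, hcoinit⟩ := exists_isChain_subset_Ioo_coinitial hN hsucc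
  have hIcc_mono : ∀ {T T'}, T' ∈ C → T' ⊆ Ioo (a T) (b T) →
      Icc (a T') (b T') ⊆ Icc (a T) (b T) :=
    fun hT' h => (hIcc _ (hCN hT')).trans (h.trans Ioo_subset_Icc_self)
  have hnest : IsNest (orderBalls G) ((fun T => Icc (a T) (b T)) '' C) := by
    refine ⟨?_, ?_, ?_⟩
    · obtain ⟨S, hS⟩ := hNe
      obtain ⟨T, hT, -⟩ := hcoinit S hS
      exact ⟨_, mem_image_of_mem _ hT⟩
    · rintro _ ⟨T, hT, rfl⟩
      exact ⟨a T, b T, hab T (hCN hT), rfl⟩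
    · rintro _ ⟨T, hT, rfl⟩ _ ⟨T', hT', rfl⟩ hne
      exact (hC hT hT' fun h => hne (h ▸ rfl)).symm.imp (hIcc_mono hT) (hIcc_mono hT')
  refine sInter_nonempty_of_forall_exists_subset (ho _ hnest) fun S hS => ?_
  obtain ⟨T, hT, hTS⟩ := hcoinit S hS
  exact ⟨_, mem_image_of_mem _ hT, (hIcc T (hCN hT)).trans hTS⟩

theorem mem_umBall_self (a c : G) : a ∈ umBall a c := ⟨0, by simp⟩

theorem umBall_mono {a c c' : G} (h : |c| ≤ |c'|) : umBall a c ⊆ umBall a c' :=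
  fun _ ⟨n, hn⟩ => ⟨n, hn.trans (nsmul_le_nsmul_right h n)⟩

theorem umBall_subset_of_mem {a c x : G} (hx : x ∈ umBall a c) : umBall x c ⊆ umBall a c := by
  obtain ⟨m, hm⟩ := hx
  rintro y ⟨n, hn⟩
  refine ⟨n + m, ?_⟩
  calc |y - a| ≤ |y - x| + |x - a| := abs_sub_le y x a
    _ ≤ n • |c| + m • |c| := add_le_add hn hm
    _ = (n + m) • |c| := (add_nsmul _ _ _).symm

theorem umBall_eq_of_mem {a c x : G} (hx : x ∈ umBall a c) : umBall x c = umBall a c :=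
  (umBall_subset_of_mem hx).antisymm <| umBall_subset_of_mem <|
    let ⟨n, hn⟩ := hx; ⟨n, abs_sub_comm a x ▸ hn⟩

theorem ordConnected_umBall (a c : G) : (umBall a c).OrdConnected :=
  ordConnected_of_uIcc_subset_left fun _ ⟨n, hn⟩ _ hz => ⟨n, (abs_sub_left_of_mem_uIcc hz).trans hn⟩

theorem ordConnected_barBell {a b : G} (hab : a ≤ b) (c d : G) :
    (umBall a c ∪ Icc a b ∪ umBall b d).OrdConnected :=
  ((ordConnected_umBall a c).union_of_mem ordConnected_Icc (mem_umBall_self a c)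
    (left_mem_Icc.2 hab)).union_of_mem (ordConnected_umBall b d)
    (Or.inr (right_mem_Icc.2 hab)) (mem_umBall_self b d)

theorem umBalls_subset_or_subset {U V : Set G} (hU : U ∈ umBalls G) (hV : V ∈ umBalls G)
    (h : (U ∩ V).Nonempty) : U ⊆ V ∨ V ⊆ U := by
  obtain ⟨a, c, rfl⟩ := hU
  obtain ⟨a', c', rfl⟩ := hV
  obtain ⟨w, hw, hw'⟩ := h
  rw [← umBall_eq_of_mem hw, ← umBall_eq_of_mem hw']
  exact (le_total |c| |c'|).imp umBall_mono umBall_mono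

theorem union_mem_umBalls {U V : Set G} (hU : U ∈ umBalls G) (hV : V ∈ umBalls G)
    (h : (U ∩ V).Nonempty) : U ∪ V ∈ umBalls G :=
  (umBalls_subset_or_subset hU hV h).elim (fun h => by rwa [union_eq_right.2 h])
    fun h => by rwa [union_eq_left.2 h]

theorem exists_umBall_of_subset_union {U V S : Set G} (hU : U ∈ umBalls G) (hV : V ∈ umBalls G)
    (hS : S ⊆ U ∪ V) (hSV : (S ∩ V).Nonempty → (U ∩ V).Nonempty) :
    ∃ W ∈ umBalls G, S ⊆ W ∧ W ⊆ U ∪ V := by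
  by_cases hUV : (U ∩ V).Nonempty
  · exact ⟨U ∪ V, union_mem_umBalls hU hV hUV, hS, subset_rfl⟩
  · exact ⟨U, hU, fun s hs => (hS hs).resolve_right fun hsV => hUV (hSV ⟨s, hs, hsV⟩),
      subset_union_left⟩

theorem exists_umBall_of_subset_barBell_of_subset_Iio {a b c d : G} (hab : a ≤ b) {S : Set G}
    (hS : S ⊆ umBall a c ∪ Icc a b ∪ umBall b d) (hSa : S ⊆ Iio a) :
    ∃ W ∈ umBalls G, S ⊆ W ∧ W ⊆ umBall a c ∪ Icc a b ∪ umBall b d := by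
  have hS' : S ⊆ umBall a c ∪ umBall b d := fun s hs => by
    rcases hS hs with (h | h) | h
    · exact Or.inl h
    · exact absurd h.1 (not_le.2 (hSa hs))
    · exact Or.inr h
  obtain ⟨W, hW, hSW, hWS⟩ := exists_umBall_of_subset_union ⟨a, c, rfl⟩ ⟨b, d, rfl⟩ hS'
    fun ⟨s, hs, hsV⟩ => ⟨a, mem_umBall_self a c,
      (ordConnected_umBall b d).out hsV (mem_umBall_self b d) ⟨(hSa hs).le, hab⟩⟩
  exact ⟨W, hW, hSW, hWS.trans (union_subset_union_left _ subset_union_left)⟩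

theorem exists_umBall_of_subset_barBell_of_subset_Ioi {a b c d : G} (hab : a ≤ b) {S : Set G}
    (hS : S ⊆ umBall a c ∪ Icc a b ∪ umBall b d) (hSb : S ⊆ Ioi b) :
    ∃ W ∈ umBalls G, S ⊆ W ∧ W ⊆ umBall a c ∪ Icc a b ∪ umBall b d := by
  have hS' : S ⊆ umBall b d ∪ umBall a c := fun s hs => by
    rcases hS hs with (h | h) | h
    · exact Or.inr h
    · exact absurd h.2 (not_le.2 (hSb hs))
    · exact Or.inl h
  obtain ⟨W, hW, hSW, hWS⟩ := exists_umBall_of_subset_union ⟨b, d, rfl⟩ ⟨a, c, rfl⟩ hS'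
    fun ⟨s, hs, hsV⟩ => ⟨b, mem_umBall_self b d,
      (ordConnected_umBall a c).out (mem_umBall_self a c) hsV ⟨hab, (hSb hs).le⟩⟩
  exact ⟨W, hW, hSW, hWS.trans (union_subset subset_union_right
    (subset_union_left.trans subset_union_left))⟩

theorem nonempty_of_mem_barBells {S : Set G} (hS : S ∈ barBells G) : S.Nonempty :=
  let ⟨a, _, c, _, _, hS⟩ := hS
  ⟨a, hS ▸ Or.inl (Or.inl (mem_umBall_self a c))⟩

theorem sInter_nonempty_of_forall_exists_umBall (hu : SphComplete (umBalls G))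
    {N : Set (Set G)} (hNe : N.Nonempty) (hN : IsChain (· ⊆ ·) N) (hne : ∀ S ∈ N, S.Nonempty)
    (h : ∀ S ∈ N, ∃ W ∈ umBalls G, (∃ S' ∈ N, S' ⊆ W) ∧ W ⊆ S) : (⋂₀ N).Nonempty := by
  have hM : IsNest (umBalls G) {W ∈ umBalls G | ∃ S' ∈ N, S' ⊆ W} := by
    refine ⟨?_, sep_subset _ _, ?_⟩
    · obtain ⟨S, hS⟩ := hNe
      obtain ⟨W, hW, hW', -⟩ := h S hS
      exact ⟨W, hW, hW'⟩
    · rintro W₁ ⟨hW₁, S₁, hS₁, hS₁W⟩ W₂ ⟨hW₂, S₂, hS₂, hS₂W⟩ -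
      obtain ⟨S, hS, hSS₁, hSS₂⟩ := hN.exists_mem_subset_subset hS₁ hS₂
      obtain ⟨s, hs⟩ := hne S hS
      exact umBalls_subset_or_subset hW₁ hW₂ ⟨s, hS₁W (hSS₁ hs), hS₂W (hSS₂ hs)⟩
  refine sInter_nonempty_of_forall_exists_subset (hu _ hM) fun S hS => ?_
  obtain ⟨W, hW, hW', hWS⟩ := h S hS
  exact ⟨W, ⟨hW, hW'⟩, hWS⟩

theorem exists_mem_subset_Ioo_of_sInter_eq_empty {N : Set (Set G)} (hN : IsChain (· ⊆ ·) N)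
    (hconn : ∀ S ∈ N, S.OrdConnected) (hempty : ⋂₀ N = ∅) {a b c d : G} (hab : a ≤ b)
    {T : Set G} (hT : T ∈ N) (hTrep : T = umBall a c ∪ Icc a b ∪ umBall b d)
    (hnoball : ∀ W ∈ umBalls G, (∃ S ∈ N, S ⊆ W) → ¬W ⊆ T) :
    ∃ T' ∈ N, T' ⊆ T ∧ T' ⊆ Ioo a b := by
  obtain ⟨S, hS, hST, hSa⟩ := exists_subset_Iio_or_Ioi hN hconn hempty hT a
  obtain ⟨S', hS', hS'T, hS'b⟩ := exists_subset_Iio_or_Ioi hN hconn hempty hT b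
  subst hTrep
  replace hSa : S ⊆ Ioi a := hSa.resolve_left fun hlt =>
    let ⟨W, hW, hSW, hWT⟩ := exists_umBall_of_subset_barBell_of_subset_Iio hab hST hlt
    hnoball W hW ⟨S, hS, hSW⟩ hWT
  replace hS'b : S' ⊆ Iio b := hS'b.resolve_right fun hgt =>
    let ⟨W, hW, hSW, hWT⟩ := exists_umBall_of_subset_barBell_of_subset_Ioi hab hS'T hgt
    hnoball W hW ⟨S', hS', hSW⟩ hWT
  obtain ⟨T', hT', hT'S, hT'S'⟩ := hN.exists_mem_subset_subset hS hS'
  exact ⟨T', hT', hT'S.trans hST, fun x hx => ⟨hSa (hT'S hx), hS'b (hT'S' hx)⟩⟩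

theorem forall_exists_umBall_of_sInter_eq_empty (ho : SphComplete (orderBalls G))
    {N : Set (Set G)} (hN : IsNest (barBells G) N) (hempty : ⋂₀ N = ∅) :
    ∀ S ∈ N, ∃ W ∈ umBalls G, (∃ S' ∈ N, S' ⊆ W) ∧ W ⊆ S := by
  obtain ⟨-, hNB, hchain⟩ := hN
  choose! a b c d hab hrep using fun S (hS : S ∈ N) => hNB hS
  have hconn : ∀ S ∈ N, S.OrdConnected := fun S hS =>
    hrep S hS ▸ ordConnected_barBell (hab S hS) _ _
  by_contra! hS₁
  obtain ⟨S₁, hS₁, hnoball⟩ := hS₁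
  have hsucc : ∀ T ∈ {T ∈ N | T ⊆ S₁}, ∃ T' ∈ {T ∈ N | T ⊆ S₁}, T' ⊆ Ioo (a T) (b T) := by
    rintro T ⟨hT, hTS₁⟩
    obtain ⟨T', hT', hT'T, hT'ab⟩ := exists_mem_subset_Ioo_of_sInter_eq_empty hchain hconn hempty
      (hab T hT) hT (hrep T hT) fun W hW hSW hWT => hnoball W hW hSW (hWT.trans hTS₁)
    exact ⟨T', ⟨hT', hT'T.trans hTS₁⟩, hT'ab⟩
  have hN' := sInter_nonempty_of_forall_Icc_subset (N := {T ∈ N | T ⊆ S₁}) ho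
    ⟨S₁, hS₁, subset_rfl⟩ (hchain.mono (sep_subset _ _)) (fun T hT => hab T hT.1)
    (fun T hT => (subset_union_right.trans subset_union_left).trans (hrep T hT.1).symm.subset) hsucc
  refine (sInter_nonempty_of_forall_exists_subset hN' fun S hS => ?_).ne_empty hempty
  obtain ⟨T, hT, hTS, hTS₁⟩ := hchain.exists_mem_subset_subset hS hS₁
  exact ⟨T, ⟨hT, hTS₁⟩, hTS⟩

end OrderedGroup

theorem barBells_sphComplete {G : Type*} [AddCommGroup G] [LinearOrder G] [IsOrderedAddMonoid G]
    (ho : SphComplete (orderBalls G)) (hu : SphComplete (umBalls G)) :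
    SphComplete (barBells G) := by
  intro N hN
  by_contra hempty
  rw [not_nonempty_iff_eq_empty] at hempty
  exact (sInter_nonempty_of_forall_exists_umBall hu hN.1 hN.2.2
    (fun S hS => nonempty_of_mem_barBells (hN.2.1 hS))
    (forall_exists_umBall_of_sInter_eq_empty ho hN hempty)).ne_empty hempty
end
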